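/- arXiv:1906.00843 — 3 statements merged into one kernel-verified Lean document; each statement's English description precedes it below -/
import Mathlib

section
/- Let κ be a regular uncountable cardinal and λ < b(κ). Then there is no club-supported (κ, λ)-gap of slaloms: whenever (u_α)_{α<κ} is a ⊆*-increasing sequence of club-supported slaloms, (v_ξ)_{ξ<λ} is a ⊆*-decreasing sequence of club-supported slaloms, and u_α ⊆* v_ξ for all α < κ and ξ < λ, then there exists a club-supported slalom w with u_α ⊆* w ⊆* v_ξ for all α < κ and ξ < λ. -/
/-!
For `β < κ` and `ξ < λ` let `F_ξ(β)` be a point beyond which `u_β ⊆ v_ξ`. Since there are only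
`λ < 𝔟(κ)` functions `F_ξ`, one `g` dominates them all modulo `κ`-small sets, so
`F_ξ ≤ max(g, d_ξ)` everywhere for some constant `d_ξ`. The diagonal union
`w(ζ) = u_0(ζ) ∪ ⋃ {u_β(ζ) : β ≤ ζ, g(β) ≤ ζ}` is a slalom by regularity of `κ`, contains `u_β`
from `max(β, g(β))` on, and is contained in `v_ξ` beyond `d_ξ` and the point where `u_0 ⊆ v_ξ`.
-/

noncomputable section

open Cardinal Set

universe u

namespace PT

/-- `A ⊆* B` (mod `< κ`): all but fewer than `κ` many elements of `A` lie in `B`. -/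
def AlmostSub (κ : Cardinal.{u}) (A B : Set κ.ord.ToType) : Prop :=
  #(↥(A \ B)) < κ

/-- `A` is a pseudo-intersection of the family `F`:
it has size `κ` and is almost contained in every member of `F`. -/
def IsPseudoInter (κ : Cardinal.{u}) (F : Set (Set κ.ord.ToType)) (A : Set κ.ord.ToType) : Prop :=
  #(↥A) = κ ∧ ∀ B ∈ F, AlmostSub κ A B

/-- The strong intersection property: every subfamily of size `< κ`
has intersection of size `κ`. -/
def HasSIP (κ : Cardinal.{u}) (F : Set (Set κ.ord.ToType)) : Prop :=
  ∀ G ⊆ F, #(↥G) < κ → #(↥(⋂₀ G)) = κ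

/-- `F` is a witness for the pseudo-intersection number: a family of `κ`-sized
subsets of `κ` with the SIP and no pseudo-intersection of size `κ`. -/
def PWitness (κ : Cardinal.{u}) (F : Set (Set κ.ord.ToType)) : Prop :=
  (∀ A ∈ F, #(↥A) = κ) ∧ HasSIP κ F ∧ ¬∃ A, IsPseudoInter κ F A

/-- The pseudo-intersection number `𝔭(κ)`. -/
def pNumber (κ : Cardinal.{u}) : Cardinal.{u} :=
  sInf {c | ∃ F, PWitness κ F ∧ #(↥F) = c}

/-- A tower of length `δ`: a `⊆*`-decreasing sequence of `κ`-sized subsets of `κ`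
with the SIP and no pseudo-intersection of size `κ`. -/
def TowerSeq (κ : Cardinal.{u}) (δ : Ordinal.{u}) (T : Ordinal.{u} → Set κ.ord.ToType) : Prop :=
  (∀ α < δ, #(↥(T α)) = κ) ∧
  (∀ α < δ, ∀ β < δ, α ≤ β → AlmostSub κ (T β) (T α)) ∧
  HasSIP κ (T '' Iio δ) ∧
  ¬∃ A, IsPseudoInter κ (T '' Iio δ) A

/-- The tower number `𝔱(κ)`: the minimal size of a tower of subsets of `κ`. -/
def tNumber (κ : Cardinal.{u}) : Cardinal.{u} :=
  sInf {c | ∃ δ T, TowerSeq κ δ T ∧ #(↥(T '' Iio δ)) = c}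

/-- `C` is a club (closed unbounded set) in `κ`. -/
def IsClubIn (κ : Cardinal.{u}) (C : Set κ.ord.ToType) : Prop :=
  (∀ a : κ.ord.ToType, ∃ b ∈ C, a < b) ∧
  ∀ a : κ.ord.ToType, (C ∩ Iio a).Nonempty → IsLUB (C ∩ Iio a) a → a ∈ C

/-- `S` is stationary in `κ`: it meets every club subset of `κ`. -/
def IsStationaryIn (κ : Cardinal.{u}) (S : Set κ.ord.ToType) : Prop :=
  ∀ C, IsClubIn κ C → (S ∩ C).Nonempty

/-- A slalom on `κ`: a map from a domain `X ⊆ κ` into the nonempty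
subsets of `κ` of size `< κ`. -/
structure Slalom (κ : Cardinal.{u}) where
  dom : Set κ.ord.ToType
  fn : κ.ord.ToType → Set κ.ord.ToType
  nonempty_fn : ∀ ξ ∈ dom, (fn ξ).Nonempty
  small_fn : ∀ ξ ∈ dom, #(↥(fn ξ)) < κ

/-- A slalom is club-supported if its domain is a club in `κ`. -/
def Slalom.ClubSupported {κ : Cardinal.{u}} (s : Slalom κ) : Prop :=
  IsClubIn κ s.dom

/-- `u ⊆* v` for slaloms: `u ξ ⊆ v ξ` for all but fewer than `κ` many
`ξ ∈ dom u ∩ dom v`. -/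
def Slalom.SubStar {κ : Cardinal.{u}} (s t : Slalom κ) : Prop :=
  #(↥{ξ : κ.ord.ToType | ξ ∈ s.dom ∩ t.dom ∧ ¬s.fn ξ ⊆ t.fn ξ}) < κ

/-- A club-supported `(μ, ν)`-gap of slaloms. -/
def ClubGap (κ μ ν : Cardinal.{u}) (u v : Ordinal.{u} → Slalom κ) : Prop :=
  (∀ γ < μ.ord, (u γ).ClubSupported) ∧
  (∀ α < ν.ord, (v α).ClubSupported) ∧
  (∀ γ γ', γ < γ' → γ' < μ.ord → (u γ).SubStar (u γ')) ∧
  (∀ α α', α < α' → α' < ν.ord → (v α').SubStar (v α)) ∧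
  (∀ γ < μ.ord, ∀ α < ν.ord, (u γ).SubStar (v α)) ∧
  ¬∃ w : Slalom κ, w.ClubSupported ∧ (∀ γ < μ.ord, (u γ).SubStar w) ∧
    ∀ α < ν.ord, w.SubStar (v α)

/-- `f ≤* g`: `f ξ ≤ g ξ` for all but fewer than `κ` many `ξ < κ`. -/
def LeStar (κ : Cardinal.{u}) (f g : κ.ord.ToType → κ.ord.ToType) : Prop :=
  #(↥{ξ : κ.ord.ToType | ¬f ξ ≤ g ξ}) < κ

/-- The bounding number `𝔟(κ)`. -/
def bNumber (κ : Cardinal.{u}) : Cardinal.{u} :=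
  sInf {c | ∃ B : Set (κ.ord.ToType → κ.ord.ToType),
    (¬∃ g, ∀ f ∈ B, LeStar κ f g) ∧ #(↥B) = c}

/-- `𝔭_cl(κ)`: minimal size of a family of clubs in `κ` with no
pseudo-intersection of size `κ`. -/
def pClNumber (κ : Cardinal.{u}) : Cardinal.{u} :=
  sInf {c | ∃ F : Set (Set κ.ord.ToType), (∀ C ∈ F, IsClubIn κ C) ∧
    (¬∃ A, IsPseudoInter κ F A) ∧ #(↥F) = c}

/-- `𝔱_cl(κ)`: minimal size of a `⊆*`-well-ordered family of clubs in `κ`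
with no pseudo-intersection of size `κ`. -/
def tClNumber (κ : Cardinal.{u}) : Cardinal.{u} :=
  sInf {c | ∃ (δ : Ordinal.{u}) (T : Ordinal.{u} → Set κ.ord.ToType),
    (∀ α < δ, IsClubIn κ (T α)) ∧
    (∀ α < δ, ∀ β < δ, α ≤ β → AlmostSub κ (T β) (T α)) ∧
    (¬∃ A, IsPseudoInter κ (T '' Iio δ) A) ∧ #(↥(T '' Iio δ)) = c}


/-- `F` is a `κ`-complete filter on `κ`: it contains `κ`, is closed upwards,
and is closed under intersections of fewer than `κ` of its members. -/
def IsKappaCompleteFilter (κ : Cardinal.{u}) (F : Set (Set κ.ord.ToType)) : Prop :=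
  Set.univ ∈ F ∧ (∀ A ∈ F, ∀ B, A ⊆ B → B ∈ F) ∧
  ∀ G ⊆ F, #(↥G) < κ → ⋂₀ G ∈ F



/-- `𝔭_F(κ)`: minimal size of a subfamily of `F` with no pseudo-intersection. -/
def pFNumber (κ : Cardinal.{u}) (F : Set (Set κ.ord.ToType)) : Cardinal.{u} :=
  sInf {c | ∃ B ⊆ F, (¬∃ A, IsPseudoInter κ B A) ∧ #(↥B) = c}

/-- The finite intersection property. -/
def HasFIP (κ : Cardinal.{u}) (F : Set (Set κ.ord.ToType)) : Prop :=
  ∀ G ⊆ F, G.Finite → #(↥(⋂₀ G)) = κ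

/-- `𝔭*(κ)`. -/
def pStarNumber (κ : Cardinal.{u}) : Cardinal.{u} :=
  sInf {c | ∃ F : Set (Set κ.ord.ToType), (∀ A ∈ F, #(↥A) = κ) ∧ HasFIP κ F ∧
    (¬∃ A, IsPseudoInter κ F A) ∧ #(↥F) = c}



/-- `𝔱*(κ)`. -/
def tStarNumber (κ : Cardinal.{u}) : Cardinal.{u} :=
  sInf {c | ∃ (δ : Ordinal.{u}) (T : Ordinal.{u} → Set κ.ord.ToType),
    (∀ α < δ, #(↥(T α)) = κ) ∧
    (∀ α < δ, ∀ β < δ, α ≤ β → AlmostSub κ (T β) (T α)) ∧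
    (¬∃ A, IsPseudoInter κ (T '' Iio δ) A) ∧ #(↥(T '' Iio δ)) = c}

/-- `D` is dense in the poset `P`. -/
def DenseBelow {P : Type u} [Preorder P] (D : Set P) : Prop :=
  ∀ p : P, ∃ q ∈ D, q ≤ p

/-- Two conditions are compatible: they have a common extension. -/
def Compat {P : Type u} [Preorder P] (p q : P) : Prop :=
  ∃ r, r ≤ p ∧ r ≤ q

/-- A filter on a poset: upward closed and downward directed. -/
def IsPosetFilter {P : Type u} [Preorder P] (G : Set P) : Prop :=
  (∀ p ∈ G, ∀ q, p ≤ q → q ∈ G) ∧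
  ∀ p ∈ G, ∀ q ∈ G, ∃ r ∈ G, r ≤ p ∧ r ≤ q

/-- A set `C` of conditions is `κ`-directed: every subset of `C` of size `< κ`
has a lower bound (in `P`). -/
def KDirected (κ : Cardinal.{u}) {P : Type u} [Preorder P] (C : Set P) : Prop :=
  ∀ D ⊆ C, #(↥D) < κ → ∃ q : P, ∀ p ∈ D, q ≤ p

/-- `P` is `κ`-centered with canonical lower bounds. -/
def KCenteredCanonical (κ : Cardinal.{u}) (P : Type u) [Preorder P] : Prop :=
  ∃ C : Ordinal.{u} → Set P,
    (∀ p : P, ∃ γ < κ.ord, p ∈ C γ) ∧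
    (∀ γ < κ.ord, KDirected κ (C γ)) ∧
    ∃ f : Ordinal.{u} → (Ordinal.{u} → Ordinal.{u}) → Ordinal.{u},
      ∀ δ < κ.ord, ∀ (p : Ordinal.{u} → P) (g : Ordinal.{u} → Ordinal.{u}),
        (∀ α < δ, g α < κ.ord ∧ p α ∈ C (g α)) →
        (∀ α < δ, ∀ β < δ, α ≤ β → p β ≤ p α) →
        f δ g < κ.ord ∧ ∃ q ∈ C (f δ g), ∀ α < δ, q ≤ p α

/-- Below every condition there is an antichain of size `κ`. -/
def KAntichainsBelow (κ : Cardinal.{u}) (P : Type u) [Preorder P] : Prop :=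
  ∀ p : P, ∃ A : Set P, (∀ a ∈ A, a ≤ p) ∧
    (∀ a ∈ A, ∀ b ∈ A, a ≠ b → ¬Compat a b) ∧ #(↥A) = κ



/-- The ordinal corresponding to an element of `o.ToType`. -/
def ordOf {o : Ordinal.{u}} (i : o.ToType) : Ordinal.{u} :=
  ((Ordinal.ToType.mk (o := o)).symm i).1

/-- `P` is stationary `κ⁺`-Knaster. -/
def StationaryKnaster (κ : Cardinal.{u}) (P : Type u) [Preorder P] : Prop :=
  ∀ p : (Order.succ κ).ord.ToType → P,
    ∃ (E : Set (Order.succ κ).ord.ToType)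
      (f : (Order.succ κ).ord.ToType → (Order.succ κ).ord.ToType),
      IsClubIn (Order.succ κ) E ∧
      (∀ i ∈ E, (ordOf i).cof = κ → f i < i) ∧
      ∀ i ∈ E, ∀ j ∈ E, (ordOf i).cof = κ → (ordOf j).cof = κ →
        f i = f j → Compat (p i) (p j)

/-- `P` is `κ`-good-Knaster (property `(∗_κ)`). -/
def GoodKnaster (κ : Cardinal.{u}) (P : Type u) [Preorder P] : Prop :=
  StationaryKnaster κ P ∧
  (∀ p : ℕ → P, (∀ m n : ℕ, m ≤ n → p n ≤ p m) → ∃ q, IsGLB (Set.range p) q) ∧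
  (∀ p q : P, Compat p q → ∃ r, IsGLB {p, q} r) ∧
  ∀ δ < κ.ord, ∀ p : Ordinal.{u} → P,
    (∀ α < δ, ∀ β < δ, α ≤ β → p β ≤ p α) → ∃ q, ∀ α < δ, q ≤ p α

/-- `MA(κ-good-Knaster)`. -/
def MAGoodKnaster (κ : Cardinal.{u}) : Prop :=
  ∀ (P : Type u) [PartialOrder P], GoodKnaster κ P →
    ∀ D : Set (Set P), (∀ d ∈ D, DenseBelow d) → #(↥D) < 2 ^ κ →
      ∃ G : Set P, IsPosetFilter G ∧ ∀ d ∈ D, (G ∩ d).Nonempty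

/-- A slalom based on a set `C`. -/
def BasedSlalom (κ : Cardinal.{u}) (C : Set κ.ord.ToType)
    (f : κ.ord.ToType → Set κ.ord.ToType) : Prop :=
  ∀ ξ ∈ C, (f ξ).Nonempty ∧ #(↥(f ξ)) < κ

/-- `f ⊆* g` for `C`-based slaloms. -/
def BasedSubStar (κ : Cardinal.{u}) (C : Set κ.ord.ToType)
    (f g : κ.ord.ToType → Set κ.ord.ToType) : Prop :=
  #(↥{ξ : κ.ord.ToType | ξ ∈ C ∧ ¬f ξ ⊆ g ξ}) < κ

/-- A `(lam, mu)`-tight gap of slaloms based on the club `C`. -/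
def TightGap (κ lam mu : Cardinal.{u}) (C : Set κ.ord.ToType)
    (U V : Ordinal.{u} → κ.ord.ToType → Set κ.ord.ToType) : Prop :=
  IsClubIn κ C ∧
  (∀ α < lam.ord, BasedSlalom κ C (U α)) ∧
  (∀ β < mu.ord, BasedSlalom κ C (V β)) ∧
  (∀ α α', α < α' → α' < lam.ord → ∀ β β', β < β' → β' < mu.ord →
    #(↥{ξ : κ.ord.ToType | ξ ∈ C ∧
      ¬(U α ξ ⊂ U α' ξ ∧ U α' ξ ⊂ V β' ξ ∧ V β' ξ ⊂ V β ξ)}) < κ) ∧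
  (∀ w, BasedSlalom κ C w → (∀ β < mu.ord, BasedSubStar κ C w (V β)) →
    ∃ α < lam.ord, BasedSubStar κ C w (U α)) ∧
  (∀ w, BasedSlalom κ C w → (∀ α < lam.ord, BasedSubStar κ C (U α) w) →
    ∃ β < mu.ord, BasedSubStar κ C (V β) w)

/-- `s_X ξ`: the least element of `X` above `ξ` (junk value `ξ` if none exists). -/
def nextIn (κ : Cardinal.{u}) (X : Set κ.ord.ToType) (ξ : κ.ord.ToType) : κ.ord.ToType :=
  haveI := Classical.dec {η : κ.ord.ToType | η ∈ X ∧ ξ < η}.Nonempty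
  if h : {η : κ.ord.ToType | η ∈ X ∧ ξ < η}.Nonempty then
    wellFounded_lt.min {η : κ.ord.ToType | η ∈ X ∧ ξ < η} h
  else ξ

theorem ordOf_lt {o : Ordinal.{u}} (i : o.ToType) : ordOf i < o :=
  (Ordinal.ToType.mk.symm i).2

theorem ordOf_mk {o : Ordinal.{u}} (a : Iio o) : ordOf (Ordinal.ToType.mk a) = a :=
  congrArg Subtype.val (Ordinal.ToType.mk.symm_apply_apply a)

section RegularCardinal

variable {κ : Cardinal.{u}}

theorem mk_Iic_toType_lt (hκ : κ.IsRegular) (a : κ.ord.ToType) : #(Iic a) < κ := by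
  simpa using mk_Iic_lt a (by simp) (by simpa using hκ.aleph0_le)

theorem mk_lt_of_forall_lt {S : Set κ.ord.ToType} {b : κ.ord.ToType} (h : ∀ x ∈ S, x < b) :
    #S < κ := by
  simpa using (mk_le_mk_of_subset h).trans_lt (mk_Iio_lt b (by simp))

theorem exists_forall_lt_of_mk_lt (hκ : κ.IsRegular) {S : Set κ.ord.ToType} (hS : #S < κ) :
    ∃ b, ∀ x ∈ S, x < b :=
  not_isCofinal_iff.1 fun hcof =>
    (Order.cof_le hcof).not_gt (by rwa [Ordinal.cof_toType, hκ.cof_ord])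

theorem mk_lt_iff_exists_forall_lt (hκ : κ.IsRegular) {S : Set κ.ord.ToType} :
    #S < κ ↔ ∃ b, ∀ x ∈ S, x < b :=
  ⟨exists_forall_lt_of_mk_lt hκ, fun ⟨_, hb⟩ => mk_lt_of_forall_lt hb⟩

end RegularCardinal

theorem LeStar.exists_le_max {κ : Cardinal.{u}} (hκ : κ.IsRegular)
    {f g : κ.ord.ToType → κ.ord.ToType} (h : LeStar κ f g) : ∃ d, ∀ β, f β ≤ max (g β) d := by
  obtain ⟨d, hd⟩ := exists_forall_lt_of_mk_lt hκ (mk_image_le.trans_lt h)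
  refine ⟨d, fun β => ?_⟩
  by_cases hβ : f β ≤ g β
  · exact le_max_of_le_left hβ
  · exact le_max_of_le_right (hd _ (mem_image_of_mem f hβ)).le

theorem exists_leStar_of_mk_lt_bNumber {κ : Cardinal.{u}}
    {B : Set (κ.ord.ToType → κ.ord.ToType)} (hB : #B < bNumber κ) :
    ∃ g, ∀ f ∈ B, LeStar κ f g := by
  by_contra hunbounded
  exact hB.not_ge (csInf_le' ⟨B, hunbounded, rfl⟩)

namespace Slalom

variable {κ : Cardinal.{u}}

theorem subStar_iff_exists_bound (hκ : κ.IsRegular) {s t : Slalom κ} :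
    s.SubStar t ↔ ∃ b, ∀ ζ, b ≤ ζ → ζ ∈ s.dom → ζ ∈ t.dom → s.fn ζ ⊆ t.fn ζ := by
  refine (mk_lt_iff_exists_forall_lt hκ).trans (exists_congr fun b => ⟨?_, ?_⟩)
  · intro h ζ hbζ hs ht
    by_contra hbad
    exact (h ζ ⟨⟨hs, ht⟩, hbad⟩).not_ge hbζ
  · rintro h ζ ⟨⟨hs, ht⟩, hbad⟩
    by_contra hζ
    exact hbad (h ζ (not_lt.1 hζ) hs ht)

/-- Requiring `β ≤ ζ` keeps fewer than `κ` slaloms at each point `ζ`; requiring `g β ≤ ζ`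
makes the union almost contained in every slalom that contains each `s β` beyond a point `≤* g`. -/
def diagUnion (hκ : κ.IsRegular) (s₀ : Slalom κ) (s : κ.ord.ToType → Slalom κ)
    (g : κ.ord.ToType → κ.ord.ToType) : Slalom κ where
  dom := s₀.dom
  fn ζ := s₀.fn ζ ∪ ⋃ β ∈ {β | β ≤ ζ ∧ g β ≤ ζ ∧ ζ ∈ (s β).dom}, (s β).fn ζ
  nonempty_fn ζ hζ := (s₀.nonempty_fn ζ hζ).mono subset_union_left
  small_fn ζ hζ := by
    refine (mk_union_le _ _).trans_lt (add_lt_of_lt hκ.aleph0_le (s₀.small_fn ζ hζ) ?_)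
    refine (card_biUnion_lt_iff_forall_of_isRegular hκ ?_).2 fun β hβ => (s β).small_fn ζ hβ.2.2
    exact (mk_le_mk_of_subset fun β hβ => hβ.1).trans_lt (mk_Iic_toType_lt hκ ζ)

variable (hκ : κ.IsRegular) (s₀ : Slalom κ) (s : κ.ord.ToType → Slalom κ)
  (g : κ.ord.ToType → κ.ord.ToType)

theorem subStar_diagUnion (β : κ.ord.ToType) : (s β).SubStar (diagUnion hκ s₀ s g) := by
  refine (subStar_iff_exists_bound hκ).2 ⟨max β (g β), fun ζ hζ hdom _ => ?_⟩
  have hβ : β ∈ {β | β ≤ ζ ∧ g β ≤ ζ ∧ ζ ∈ (s β).dom} :=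
    ⟨(le_max_left _ _).trans hζ, (le_max_right _ _).trans hζ, hdom⟩
  exact (subset_biUnion_of_mem (u := fun β => (s β).fn ζ) hβ).trans subset_union_right

theorem diagUnion_subStar {t : Slalom κ} {F : κ.ord.ToType → κ.ord.ToType}
    (hF : ∀ β ζ, F β ≤ ζ → ζ ∈ (s β).dom → ζ ∈ t.dom → (s β).fn ζ ⊆ t.fn ζ)
    (hFg : LeStar κ F g) (h₀ : s₀.SubStar t) : (diagUnion hκ s₀ s g).SubStar t := by
  obtain ⟨d, hd⟩ := hFg.exists_le_max hκ
  obtain ⟨b₀, hb₀⟩ := (subStar_iff_exists_bound hκ).1 h₀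
  refine (subStar_iff_exists_bound hκ).2 ⟨max d b₀, fun ζ hζ hdom ht => ?_⟩
  refine union_subset (hb₀ ζ ((le_max_right _ _).trans hζ) hdom ht) (iUnion₂_subset ?_)
  rintro β ⟨-, hgβ, hβ⟩
  exact hF β ζ ((hd β).trans (max_le hgβ ((le_max_left _ _).trans hζ))) hβ ht

end Slalom

theorem no_kappa_lambda_gap_of_lt_bNumber_general (κ : Cardinal.{u}) (hreg : κ.IsRegular)
    (lam : Cardinal.{u}) (hlam : lam < bNumber κ)
    (u v : Ordinal.{u} → Slalom κ)
    (hu : ∀ α < κ.ord, (u α).ClubSupported)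
    (huv : ∀ α < κ.ord, ∀ ξ < lam.ord, (u α).SubStar (v ξ)) :
    ∃ w : Slalom κ, w.ClubSupported ∧ (∀ α < κ.ord, (u α).SubStar w) ∧
      ∀ ξ < lam.ord, w.SubStar (v ξ) := by
  have hF (ξ : lam.ord.ToType) (β : κ.ord.ToType) := (Slalom.subStar_iff_exists_bound hreg).1
    (huv (ordOf β) (ordOf_lt β) (ordOf ξ) (ordOf_lt ξ))
  choose F hF using hF
  obtain ⟨g, hg⟩ := exists_leStar_of_mk_lt_bNumber (B := range F)
    (mk_range_le.trans_lt (by rwa [mk_ord_toType]))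
  have hκ₀ : (0 : Ordinal) < κ.ord := ord_pos.2 hreg.pos
  refine ⟨Slalom.diagUnion hreg (u 0) (fun β => u (ordOf β)) g, hu 0 hκ₀, fun α hα => ?_,
    fun ξ hξ => ?_⟩
  · simpa only [ordOf_mk] using Slalom.subStar_diagUnion hreg (u 0) (fun β => u (ordOf β)) g
      (Ordinal.ToType.mk ⟨α, hα⟩)
  · simpa only [ordOf_mk] using Slalom.diagUnion_subStar hreg (u 0) (fun β => u (ordOf β)) g
      (hF (Ordinal.ToType.mk ⟨ξ, hξ⟩)) (hg _ (mem_range_self _)) (huv 0 hκ₀ _ (ordOf_lt _))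

/-- Let κ be regular uncountable and λ < b(κ). Then there is no
club-supported (κ, λ)-gap of slaloms: any ⊆*-increasing κ-sequence of club-supported
slaloms sitting ⊆*-below a ⊆*-decreasing λ-sequence of club-supported slaloms can be
interpolated by a club-supported slalom. -/
theorem no_kappa_lambda_gap_of_lt_bNumber (κ : Cardinal.{u}) (hreg : κ.IsRegular)
    (hunc : ℵ₀ < κ) (lam : Cardinal.{u}) (hlam : lam < bNumber κ)
    (u v : Ordinal.{u} → Slalom κ)
    (hu : ∀ α < κ.ord, (u α).ClubSupported)
    (hv : ∀ ξ < lam.ord, (v ξ).ClubSupported)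
    (huinc : ∀ α β, α < β → β < κ.ord → (u α).SubStar (u β))
    (hvdec : ∀ ξ η, ξ < η → η < lam.ord → (v η).SubStar (v ξ))
    (huv : ∀ α < κ.ord, ∀ ξ < lam.ord, (u α).SubStar (v ξ)) :
    ∃ w : Slalom κ, w.ClubSupported ∧ (∀ α < κ.ord, (u α).SubStar w) ∧
      ∀ ξ < lam.ord, w.SubStar (v ξ) :=
  no_kappa_lambda_gap_of_lt_bNumber_general κ hreg lam hlam u v hu huv

end PT
end
end

section
/- If κ is an uncountable cardinal with cf(κ) = ω, then t*(κ) is uncountable. -/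
noncomputable section

open Cardinal Set

universe u

namespace PT

/-!
Since `sInf ∅ = 0`, a tower without pseudo-intersection has to be built first. Build it greedily:
at each stage pass to a `κ`-sized subset `B` of a pseudo-intersection `A` of the earlier stages with
`|A \ B| = κ`. The stages are then pairwise distinct, so the construction cannot run through all
ordinals and stops at a stage without pseudo-intersection.

No countable tower lacks a pseudo-intersection: enumerate it as `e₀, e₁, …`; some member is almost
contained in `e₀, …, eₙ`, which yields a `κ`-sized `Sₙ ⊆ e₀ ∩ ⋯ ∩ eₙ`. As `cf κ = ω`, there are
cardinals `μₙ < κ` cofinal in `κ`, and the union of sets `Aₙ ⊆ Sₙ` of size `μₙ` has size `κ` and is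
contained in `e_m` up to `A₀ ∪ ⋯ ∪ A_{m-1}`, a set of size `< κ`.
-/

section CardinalArithmetic

variable {X : Type u} {κ : Cardinal.{u}}

theorem mk_diff_eq_of_lt (hκ : ℵ₀ ≤ κ) {s t : Set X} (hs : #s = κ) (ht : #t < κ) :
    #↥(s \ t) = κ := by
  refine le_antisymm (hs ▸ mk_le_mk_of_subset sdiff_subset) (not_lt.1 fun hlt => hs.not_lt ?_)
  calc #s ≤ #↥(s \ t ∪ t) := mk_le_mk_of_subset (by simp)
    _ ≤ #↥(s \ t) + #t := mk_union_le _ _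
    _ < κ := add_lt_of_lt hκ hlt ht

theorem mk_biUnion_lt_of_finite {ι : Type*} (hκ : ℵ₀ ≤ κ) {s : Set ι} (hs : s.Finite)
    {t : ι → Set X} (ht : ∀ i ∈ s, #(t i) < κ) : #↥(⋃ i ∈ s, t i) < κ := by
  induction s, hs using Set.Finite.induction_on with
  | empty => simpa using aleph0_pos.trans_le hκ
  | @insert i s _ _ ih =>
    rw [biUnion_insert]
    exact (mk_union_le _ _).trans_lt (add_lt_of_lt hκ (ht i (mem_insert i s))
      (ih fun j hj => ht j (mem_insert_of_mem i hj)))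

theorem exists_subset_mk_eq_mk_diff_eq (hκ : ℵ₀ ≤ κ) {A : Set X} (hA : #A = κ) :
    ∃ B ⊆ A, #B = κ ∧ #↥(A \ B) = κ := by
  obtain ⟨e⟩ : Nonempty (A ≃ A ⊕ A) := Cardinal.eq.1 (by simp [hA, add_eq_self hκ])
  have hmk : ∀ S : Set (A ⊕ A), #(e ⁻¹' S) = #S := fun S => mk_preimage_equiv e S
  refine ⟨Subtype.val '' (e ⁻¹' range Sum.inl), image_val_subset, ?_, ?_⟩
  · rw [mk_image_eq Subtype.val_injective, hmk, mk_range_eq _ Sum.inl_injective, hA]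
  · rw [← image_val_compl, mk_image_eq Subtype.val_injective, ← preimage_compl, compl_range_inl,
      hmk, mk_range_eq _ Sum.inr_injective, hA]

end CardinalArithmetic

theorem exists_seq_cofinal_of_cof_eq_aleph0 {κ : Cardinal.{u}} (hκ : ℵ₀ ≤ κ)
    (hcof : κ.ord.cof = ℵ₀) : ∃ μ : ℕ → Cardinal.{u}, (∀ n, μ n < κ) ∧ ∀ c < κ, ∃ n, c < μ n := by
  have hlim : Order.IsSuccLimit κ := by
    rcases isRegular_or_isSingular hκ with hreg | hsing
    · rw [← hreg.cof_ord, hcof]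
      exact isSuccLimit_aleph0
    · exact hsing.isSuccLimit
  obtain ⟨f, hf⟩ :=
    Ordinal.exists_isFundamentalSeq (a := Ordinal.omega0) (by rw [hcof, ord_aleph0])
  refine ⟨fun n => (f ⟨n, Ordinal.natCast_lt_omega0 n⟩).1.card,
    fun n => lt_ord.1 (f _).2, fun c hc => ?_⟩
  obtain ⟨_, ⟨i, rfl⟩, hi⟩ :=
    hf.isCofinal_range ⟨(Order.succ c).ord, ord_lt_ord.2 (hlim.succ_lt hc)⟩
  obtain ⟨n, hn⟩ := Ordinal.lt_omega0.1 i.2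
  obtain rfl : i = ⟨n, Ordinal.natCast_lt_omega0 n⟩ := Subtype.ext hn
  exact ⟨n, Order.succ_le_iff.1 (ord_le.1 hi)⟩

section PseudoIntersection

variable {κ : Cardinal.{u}}

theorem exists_pseudoInter_range_of_cof_eq_aleph0 (hκ : ℵ₀ ≤ κ) (hcof : κ.ord.cof = ℵ₀)
    (e : ℕ → Set κ.ord.ToType)
    (he : ∀ n, ∃ C : Set κ.ord.ToType, #C = κ ∧ ∀ m ≤ n, AlmostSub κ C (e m)) :
    ∃ A, IsPseudoInter κ (range e) A := by
  choose C hC hCe using he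
  obtain ⟨μ, hμκ, hμ⟩ := exists_seq_cofinal_of_cof_eq_aleph0 hκ hcof
  set S : ℕ → Set κ.ord.ToType := fun n => C n \ ⋃ m ∈ Iic n, C n \ e m
  have hS : ∀ n, #(S n) = κ := fun n =>
    mk_diff_eq_of_lt hκ (hC n) (mk_biUnion_lt_of_finite hκ (finite_Iic n) (hCe n))
  have hSe : ∀ m n, m ≤ n → S n ⊆ e m := fun m n hmn x hx => by
    by_contra hxe
    exact hx.2 (mem_biUnion (show m ∈ Iic n from hmn) ⟨hx.1, hxe⟩)
  choose A hAS hA using fun n => le_mk_iff_exists_subset.1 ((hμκ n).le.trans_eq (hS n).symm)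
  refine ⟨⋃ n, A n, le_antisymm ((mk_set_le _).trans_eq (mk_ord_toType κ)) ?_, ?_⟩
  · refine le_of_forall_lt fun c hc => ?_
    obtain ⟨n, hn⟩ := hμ c hc
    exact hn.trans_le (hA n ▸ mk_le_mk_of_subset (subset_iUnion A n))
  · rintro _ ⟨m, rfl⟩
    have hsub : (⋃ n, A n) \ e m ⊆ ⋃ n ∈ Iio m, A n := by
      rintro x ⟨hx, hxe⟩
      obtain ⟨n, hn⟩ := mem_iUnion.1 hx
      exact mem_biUnion (not_le.1 fun hmn => hxe (hSe m n hmn (hAS n hn))) hn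
    exact (mk_le_mk_of_subset hsub).trans_lt
      (mk_biUnion_lt_of_finite hκ (finite_Iio m) fun n _ => (hA n).trans_lt (hμκ n))

theorem exists_pseudoInter_of_mk_le_aleph0 (hκ : ℵ₀ ≤ κ) (hcof : κ.ord.cof = ℵ₀)
    {δ : Ordinal.{u}} {T : Ordinal.{u} → Set κ.ord.ToType} (hT : ∀ α < δ, #(T α) = κ)
    (hdec : ∀ α < δ, ∀ β < δ, α ≤ β → AlmostSub κ (T β) (T α))
    (hcount : #↥(T '' Iio δ) ≤ ℵ₀) : ∃ A, IsPseudoInter κ (T '' Iio δ) A := by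
  rcases (T '' Iio δ).eq_empty_or_nonempty with hempty | hne
  · exact ⟨univ, by rw [mk_univ, mk_ord_toType], by simp [hempty]⟩
  obtain ⟨e, he⟩ := (countable_coe_iff.1 (mk_le_aleph0_iff.1 hcount)).exists_eq_range hne
  choose a ha hae using fun n => (he ▸ mem_range_self n : e n ∈ T '' Iio δ)
  rw [he]
  refine exists_pseudoInter_range_of_cof_eq_aleph0 hκ hcof e fun n => ?_
  obtain ⟨m₀, -, hmax⟩ := exists_max_image (Iic n) a (finite_Iic n) nonempty_Iic
  exact ⟨T (a m₀), hT _ (ha m₀), fun m hm => hae m ▸ hdec _ (ha m) _ (ha m₀) (hmax m hm)⟩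

end PseudoIntersection

section GreedyTower

variable {κ : Cardinal.{u}}

def greedyStep (κ : Cardinal.{u}) (F : Set (Set κ.ord.ToType)) : Set κ.ord.ToType :=
  Classical.epsilon fun B => ∃ A, IsPseudoInter κ F A ∧ B ⊆ A ∧ #B = κ ∧ #↥(A \ B) = κ

def greedyTower (κ : Cardinal.{u}) (β : Ordinal.{u}) : Set κ.ord.ToType :=
  greedyStep κ (range fun α : Iio β => greedyTower κ α)
termination_by β
decreasing_by exact α.2

theorem greedyStep_spec (hκ : ℵ₀ ≤ κ) {F : Set (Set κ.ord.ToType)}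
    (hF : ∃ A, IsPseudoInter κ F A) :
    ∃ A, IsPseudoInter κ F A ∧ greedyStep κ F ⊆ A ∧
      #(greedyStep κ F) = κ ∧ #↥(A \ greedyStep κ F) = κ := by
  obtain ⟨A, hA⟩ := hF
  obtain ⟨B, hBA, hB, hAB⟩ := exists_subset_mk_eq_mk_diff_eq hκ hA.1
  exact Classical.epsilon_spec
    (p := fun B => ∃ A, IsPseudoInter κ F A ∧ B ⊆ A ∧ #B = κ ∧ #↥(A \ B) = κ)
    ⟨B, A, hA, hBA, hB, hAB⟩

theorem greedyTower_eq (β : Ordinal.{u}) :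
    greedyTower κ β = greedyStep κ (greedyTower κ '' Iio β) := by
  rw [greedyTower, image_eq_range]

theorem greedyTower_spec (hκ : ℵ₀ ≤ κ) {β : Ordinal.{u}}
    (hβ : ∃ A, IsPseudoInter κ (greedyTower κ '' Iio β) A) :
    ∃ A, IsPseudoInter κ (greedyTower κ '' Iio β) A ∧ greedyTower κ β ⊆ A ∧
      #(greedyTower κ β) = κ ∧ #↥(A \ greedyTower κ β) = κ := by
  rw [greedyTower_eq]
  exact greedyStep_spec hκ hβ

theorem greedyTower_almostSub (hκ : ℵ₀ ≤ κ) {α β : Ordinal.{u}} (hαβ : α < β)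
    (hβ : ∃ A, IsPseudoInter κ (greedyTower κ '' Iio β) A) :
    AlmostSub κ (greedyTower κ β) (greedyTower κ α) := by
  obtain ⟨A, hA, hsub, -⟩ := greedyTower_spec hκ hβ
  exact (mk_le_mk_of_subset (sdiff_subset_sdiff_left hsub)).trans_lt
    (hA.2 _ (mem_image_of_mem _ hαβ))

-- `A ⊆* greedyTower κ α`, while `A \ greedyTower κ β` has size `κ`.
theorem greedyTower_ne (hκ : ℵ₀ ≤ κ) {α β : Ordinal.{u}} (hαβ : α < β)
    (hβ : ∃ A, IsPseudoInter κ (greedyTower κ '' Iio β) A) :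
    greedyTower κ α ≠ greedyTower κ β := by
  obtain ⟨A, hA, -, -, hAβ⟩ := greedyTower_spec hκ hβ
  intro heq
  have hAα : AlmostSub κ A (greedyTower κ α) := hA.2 _ (mem_image_of_mem _ hαβ)
  rw [AlmostSub, heq, hAβ] at hAα
  exact hAα.false

theorem exists_not_pseudoInter_greedyTower (hκ : ℵ₀ ≤ κ) :
    ∃ β, ¬∃ A, IsPseudoInter κ (greedyTower κ '' Iio β) A := by
  by_contra! hgood
  exact not_injective_of_ordinal (greedyTower κ)
    (.of_lt_imp_ne fun α β hαβ => greedyTower_ne hκ hαβ (hgood β))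

theorem exists_tower_not_pseudoInter (hκ : ℵ₀ ≤ κ) :
    ∃ (δ : Ordinal.{u}) (T : Ordinal.{u} → Set κ.ord.ToType),
      (∀ α < δ, #(T α) = κ) ∧ (∀ α < δ, ∀ β < δ, α ≤ β → AlmostSub κ (T β) (T α)) ∧
      ¬∃ A, IsPseudoInter κ (T '' Iio δ) A := by
  obtain ⟨δ, hδ, hmin⟩ := wellFounded_lt.has_min _ (exists_not_pseudoInter_greedyTower hκ)
  have hgood : ∀ α < δ, ∃ A, IsPseudoInter κ (greedyTower κ '' Iio α) A :=
    fun α hα => not_not.1 fun h => hmin α h hα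
  refine ⟨δ, greedyTower κ, fun α hα => ?_, fun α _ β hβ hαβ => ?_, hδ⟩
  · obtain ⟨-, -, -, hsize, -⟩ := greedyTower_spec hκ (hgood α hα)
    exact hsize
  · rcases hαβ.lt_or_eq with hlt | rfl
    · exact greedyTower_almostSub hκ hlt (hgood β hβ)
    · simpa [AlmostSub] using aleph0_pos.trans_le hκ

end GreedyTower

/-- If κ is an uncountable cardinal with cf(κ) = ω,
then t*(κ) is uncountable. -/
theorem aleph0_lt_tStar (κ : Cardinal.{u}) (hunc : ℵ₀ < κ)
    (hcof : κ.ord.cof = ℵ₀) :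
    ℵ₀ < tStarNumber κ := by
  obtain ⟨δ, T, hT, hdec, hnone⟩ := exists_tower_not_pseudoInter hunc.le
  refine Order.succ_le_iff.1 (le_csInf ⟨_, δ, T, hT, hdec, hnone, rfl⟩ ?_)
  rintro _ ⟨δ', T', hT', hdec', hnot, rfl⟩
  exact Order.succ_le_of_lt (lt_of_not_ge fun hcount =>
    hnot (exists_pseudoInter_of_mk_le_aleph0 hunc.le hcof hT' hdec' hcount))

end PT
end
end

section
/- Let κ be a regular uncountable cardinal, μ < b(κ), and let (E_γ)_{γ<μ} be a family of κ-sized subsets of κ. Then there is a club X ⊆ κ such that for every γ < μ, for all but fewer than κ many ξ ∈ X, E_γ ∩ [ξ, s_X(ξ)) ≠ ∅, where s_X(ξ) = min(X \ (ξ+1)). -/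
/-!
Let `f_γ ξ` be the least element of `E_γ` above `ξ`. Since `μ < 𝔟(κ)`, a single `g` eventually
dominates every `f_γ`. For regular uncountable `κ` the closure points of `g`, the `ξ` with
`g η < ξ` for all `η < ξ`, form a club `X`. If `ξ ∈ X` and `f_γ ξ ≤ g ξ`, then `s_X ξ` is a
closure point above `ξ`, so `f_γ ξ ≤ g ξ < s_X ξ` and `f_γ ξ ∈ E_γ ∩ [ξ, s_X ξ)`.
-/

noncomputable section

open Cardinal Set

universe u

namespace PT

section ClosurePoints

variable {α : Type*} [LinearOrder α]

def closurePoints (g : α → α) : Set α :=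
  {ξ | ∀ η < ξ, g η < ξ}

theorem bddAbove_of_mk_lt_cof {S : Set α} (hS : #S < Order.cof α) : BddAbove S :=
  .of_not_isCofinal fun h => (Order.cof_le h).not_gt hS

theorem dirSupClosed_closurePoints (g : α → α) : DirSupClosed (closurePoints g) := by
  intro d hd _ _ a ha η hη
  obtain ⟨x, hxd, hηx⟩ := (lt_isLUB_iff ha).1 hη
  exact (hd hxd η hηx).trans_le (ha.1 hxd)

section WellFoundedLT

variable [WellFoundedLT α]

attribute [local instance]
  WellFoundedLT.toOrderBot WellFoundedLT.conditionallyCompleteLinearOrderBot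

theorem isCofinal_closurePoints (hα : ℵ₀ < Order.cof α) {g : α → α}
    (hg : ∀ a, BddAbove (g '' Iic a)) : IsCofinal (closurePoints g) := by
  cases isEmpty_or_nonempty α
  · exact .of_isEmpty
  have : NoMaxOrder α := by
    rw [← noTopOrder_iff_noMaxOrder, ← Order.one_lt_cof_iff]
    exact one_lt_aleph0.trans hα
  have hstep : ∀ d, ∃ e, d < e ∧ ∀ η ≤ d, g η < e := by
    intro d
    obtain ⟨u, hu⟩ := hg d
    obtain ⟨e, he⟩ := exists_gt (max d u)
    exact ⟨e, (le_max_left _ _).trans_lt he,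
      fun η hη => (hu (mem_image_of_mem g hη)).trans_lt ((le_max_right _ _).trans_lt he)⟩
  choose step hstep using hstep
  intro a
  set c : ℕ → α := fun n => step^[n] a
  have hc : ∀ n, c n < c (n + 1) ∧ ∀ η ≤ c n, g η < c (n + 1) := fun n => by
    simpa only [c, Function.iterate_succ_apply'] using hstep (c n)
  have hbdd : BddAbove (range c) :=
    bddAbove_of_mk_lt_cof (hα.trans_le' (by simpa using mk_range_le_lift (f := c)))
  refine ⟨⨆ n, c n, fun η hη => ?_, le_ciSup hbdd 0⟩
  obtain ⟨n, hn⟩ := (lt_ciSup_iff hbdd).1 hη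
  exact ((hc n).2 η hn.le).trans ((hc (n + 1)).1.trans_le (le_ciSup hbdd (n + 2)))

theorem isClub_closurePoints (hα : ℵ₀ < Order.cof α) {g : α → α}
    (hg : ∀ a, BddAbove (g '' Iic a)) : IsClub (closurePoints g) :=
  ⟨dirSupClosed_closurePoints g, isCofinal_closurePoints hα hg⟩

end WellFoundedLT

end ClosurePoints

section RegularCardinal

variable {κ : Cardinal.{u}}

theorem mk_Iic_toType_ord_lt (hκ : ℵ₀ ≤ κ) (a : κ.ord.ToType) : #(Iic a) < κ := by
  simpa using Cardinal.mk_Iic_lt a (by simp) (by simpa using hκ)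

theorem cof_toType_ord (hreg : κ.IsRegular) : Order.cof κ.ord.ToType = κ := by
  rw [Ordinal.cof_toType, hreg.cof_ord]

theorem exists_mem_gt_of_mk_eq (hκ : ℵ₀ ≤ κ) {S : Set κ.ord.ToType} (hS : #S = κ)
    (a : κ.ord.ToType) : ∃ b ∈ S, a < b := by
  by_contra h
  have hSa : S ⊆ Iic a := fun b hb => not_lt.1 fun hab => h ⟨b, hb, hab⟩
  exact (mk_Iic_toType_ord_lt hκ a).not_ge (hS.symm.trans_le (mk_le_mk_of_subset hSa))

theorem isClubIn_of_isClub (hκ : ℵ₀ ≤ κ) {C : Set κ.ord.ToType} (hC : IsClub C) : IsClubIn κ C := by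
  have := Cardinal.noMaxOrder hκ
  refine ⟨fun a => ?_, fun a hne hlub => hC.isLUB_mem inter_subset_left hne hlub⟩
  obtain ⟨a', ha'⟩ := exists_gt a
  obtain ⟨b, hb, hab⟩ := hC.isCofinal a'
  exact ⟨b, hb, ha'.trans_le hab⟩

theorem exists_forall_leStar_of_lt_bNumber {μ : Cardinal.{u}} (hμ : μ < bNumber κ)
    (F : Ordinal.{u} → κ.ord.ToType → κ.ord.ToType) :
    ∃ g, ∀ γ < μ.ord, LeStar κ (F γ) g := by
  by_contra! h
  have hB : #(F '' Iio μ.ord) ≤ μ := by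
    simpa [Cardinal.mk_Iio_ordinal] using mk_image_le_lift (f := F) (s := Iio μ.ord)
  have hunbdd : ¬∃ g, ∀ f ∈ F '' Iio μ.ord, LeStar κ f g := by
    rintro ⟨g, hg⟩
    obtain ⟨γ, hγ, hFg⟩ := h g
    exact hFg (hg _ ⟨γ, hγ, rfl⟩)
  have hbB : bNumber κ ≤ #(F '' Iio μ.ord) := csInf_le' ⟨_, hunbdd, rfl⟩
  exact (hbB.trans hB).not_gt hμ

theorem nextIn_mem_and_lt {X : Set κ.ord.ToType} {ξ : κ.ord.ToType} (h : ∃ η ∈ X, ξ < η) :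
    nextIn κ X ξ ∈ X ∧ ξ < nextIn κ X ξ := by
  have h' : {η | η ∈ X ∧ ξ < η}.Nonempty := h
  rw [nextIn, dif_pos h']
  exact wellFounded_lt.min_mem _ h'

theorem mk_setOf_inter_Ico_nextIn_eq_empty_lt {E X : Set κ.ord.ToType}
    {g : κ.ord.ToType → κ.ord.ToType} (hE : ∀ a, ∃ b ∈ E, a < b) (hX : ∀ a, ∃ b ∈ X, a < b)
    (hXg : X ⊆ closurePoints g) (hEg : LeStar κ (nextIn κ E) g) :
    #{ξ | ξ ∈ X ∧ E ∩ Ico ξ (nextIn κ X ξ) = ∅} < κ := by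
  refine (mk_le_mk_of_subset ?_).trans_lt hEg
  rintro ξ ⟨-, hξ⟩ hle
  obtain ⟨hEmem, hξE⟩ := nextIn_mem_and_lt (hE ξ)
  obtain ⟨hXmem, hξX⟩ := nextIn_mem_and_lt (hX ξ)
  have hlt : nextIn κ E ξ < nextIn κ X ξ := hle.trans_lt (hXg hXmem ξ hξX)
  exact (hξ ▸ ⟨hEmem, hξE.le, hlt⟩ : nextIn κ E ξ ∈ (∅ : Set κ.ord.ToType))

end RegularCardinal

/-- Let κ be regular uncountable, μ < b(κ), and (E_γ)_{γ<μ} a family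
of κ-sized subsets of κ. Then there is a club X ⊆ κ such that for every γ < μ,
for all but fewer than κ many ξ ∈ X, E_γ ∩ [ξ, s_X(ξ)) ≠ ∅. -/
theorem exists_club_hitting_intervals (κ : Cardinal.{u}) (hreg : κ.IsRegular)
    (hunc : ℵ₀ < κ) (μ : Cardinal.{u}) (hμ : μ < bNumber κ)
    (E : Ordinal.{u} → Set κ.ord.ToType) (hE : ∀ γ < μ.ord, #(↥(E γ)) = κ) :
    ∃ X : Set κ.ord.ToType, IsClubIn κ X ∧
      ∀ γ < μ.ord,
        #(↥{ξ : κ.ord.ToType | ξ ∈ X ∧ E γ ∩ Ico ξ (nextIn κ X ξ) = ∅}) < κ := by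
  obtain ⟨g, hg⟩ := exists_forall_leStar_of_lt_bNumber hμ fun γ => nextIn κ (E γ)
  have hcof : Order.cof κ.ord.ToType = κ := cof_toType_ord hreg
  have hclub : IsClubIn κ (closurePoints g) := by
    refine isClubIn_of_isClub hreg.aleph0_le
      (isClub_closurePoints (by rwa [hcof]) fun a => bddAbove_of_mk_lt_cof ?_)
    rw [hcof]
    exact mk_image_le.trans_lt (mk_Iic_toType_ord_lt hreg.aleph0_le a)
  exact ⟨closurePoints g, hclub, fun γ hγ => mk_setOf_inter_Ico_nextIn_eq_empty_lt
    (exists_mem_gt_of_mk_eq hreg.aleph0_le (hE γ hγ)) hclub.1 le_rfl (hg γ hγ)⟩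

end PT
end
end
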